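/- arXiv:1201.3513 — 3 statements merged into one kernel-verified Lean document; each statement's English description precedes it below -/
import Mathlib

section
/- There exist n+1 dyadic filtrations A_0, ..., A_n of R^n (each a family of half-open axis-parallel cubes, with generation k consisting of a partition of R^n into cubes of side 2^{-k}, and any two cubes in a filtration disjoint or nested) such that every Euclidean ball B in R^n is contained in some cube Q belonging to one of the filtrations with diam(Q) <= c_n * diam(B), where c_n = 2 * p_n * sqrt(n) and p_n is the smallest odd integer greater than n. -/
open MeasureTheory

/-- An axis-parallel half-open cube in `ℝⁿ`, given by its lower corner `c`
and its side length `s`. -/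
structure Cube (n : ℕ) where
  c : EuclideanSpace ℝ (Fin n)
  s : ℝ

/-- The set of points of a cube: `∏ᵢ [cᵢ, cᵢ + s)`. -/
def Cube.set {n : ℕ} (Q : Cube n) : Set (EuclideanSpace ℝ (Fin n)) :=
  {y | ∀ i, Q.c i ≤ y i ∧ y i < Q.c i + Q.s}

/-- The concentric dilate `tQ` of a cube `Q`. -/
noncomputable def Cube.dilate {n : ℕ} (Q : Cube n) (t : ℝ) : Cube n :=
  ⟨WithLp.toLp 2 (fun i => Q.c i - (t - 1) * Q.s / 2), t * Q.s⟩

/-- A dyadic filtration of `ℝⁿ`: every cube has side length `2^{-k}` for some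
`k ∈ ℤ`, the cubes of each generation `k` partition `ℝⁿ`, and any two cubes
of the family are nested or disjoint. -/
def IsDyadicFiltration {n : ℕ} (F : Set (Cube n)) : Prop :=
  (∀ Q ∈ F, ∃ k : ℤ, Q.s = (2 : ℝ) ^ (-k)) ∧
  (∀ k : ℤ, ∀ x : EuclideanSpace ℝ (Fin n),
    ∃! Q : Cube n, Q ∈ F ∧ Q.s = (2 : ℝ) ^ (-k) ∧ x ∈ Q.set) ∧
  (∀ Q ∈ F, ∀ Q' ∈ F, Q.set ⊆ Q'.set ∨ Q'.set ⊆ Q.set ∨ Q.set ∩ Q'.set = ∅)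

/-- `pn n` is the smallest odd integer strictly greater than `n`. -/
def pn (n : ℕ) : ℕ := if n % 2 = 0 then n + 1 else n + 2

/-- The covering constant `c_n = 2 pₙ √n` of Theorem A. -/
noncomputable def cN (n : ℕ) : ℝ := 2 * pn n * Real.sqrt n

/-- The dyadic (nondoubling) maximal function associated to a family `A` of
cubes: `M f (x) = sup_{x ∈ Q ∈ A} μ(2Q)⁻¹ ∫_Q |f| dμ`. -/
noncomputable def maxFn {n : ℕ} (μ : Measure (EuclideanSpace ℝ (Fin n)))
    (A : Set (Cube n)) (f : EuclideanSpace ℝ (Fin n) → ℝ)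
    (x : EuclideanSpace ℝ (Fin n)) : ENNReal :=
  ⨆ Q ∈ A, ⨆ _ : x ∈ Q.set,
    (μ (Q.dilate 2).set)⁻¹ * ∫⁻ y in Q.set, ENNReal.ofReal |f y| ∂μ

open Classical in
/-- Weights `w_j = χ_{Q_j} / ∑ₖ χ_{Q_k}`. -/
noncomputable def wfun {n J : ℕ} (Q : Fin J → Cube n) (j : Fin J)
    (x : EuclideanSpace ℝ (Fin n)) : ℝ :=
  (if x ∈ (Q j).set then (1 : ℝ) else 0) /
    (∑ i : Fin J, if x ∈ (Q i).set then (1 : ℝ) else 0)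

open Set

/-!
The `m`-th filtration (`0 ≤ m ≤ n`) has as generation `k` the lattice of cubes
`2^{-k} (z + m uₖ / p + [0,1)ⁿ)`, `z ∈ ℤⁿ`, where `p = pₙ` and `uₖ ≡ 2^k (mod p)`
(2 is a unit mod the odd `p`, so this makes sense also for `k < 0`).
Since `2^d uₖ ≡ u_{k+d} (mod p)`, the lattice of generation `k + d` refines that of
generation `k`, which gives the nesting. Given a ball of radius `r`, take the
generation of side `s = 2^{-k} ∈ (2rp, 4rp]`. In each coordinate the cube endpoints
of the `n + 1` filtrations are points `(s/p)(pw + m uₖ)`, pairwise distinct because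
`uₖ` is a unit mod `p` and `m < p`, hence at least `s/p > 2r` apart; so every coordinate
projection of the ball meets an endpoint of at most one filtration, and by pigeonhole
some filtration has a cube containing the ball. Its diameter is `√n s ≤ 4 p √n r`.
-/

lemma pn_odd (n : ℕ) : Odd (pn n) := by
  unfold pn
  split_ifs <;> exact Nat.odd_iff.2 (by omega)

lemma lt_pn (n : ℕ) : n < pn n := by
  unfold pn
  split_ifs <;> omega

lemma exists_lt_two_zpow_neg_le {x : ℝ} (hx : 0 < x) :
    ∃ k : ℤ, x < 2 ^ (-k) ∧ (2 : ℝ) ^ (-k) ≤ 2 * x := by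
  obtain ⟨K, hK, hK'⟩ := exists_mem_Ico_zpow hx one_lt_two
  refine ⟨-(K + 1), ?_, ?_⟩ <;> rw [neg_neg]
  · exact hK'
  · rw [zpow_add_one₀ two_ne_zero]
    linarith

lemma mem_Ico_mul_iff_floor_eq {s : ℝ} (hs : 0 < s) (t x : ℝ) (z : ℤ) :
    x ∈ Ico (s * (z + t)) (s * (z + t) + s) ↔ ⌊x / s - t⌋ = z := by
  rw [Int.floor_eq_iff, mem_Ico, le_sub_iff_add_le, sub_lt_iff_lt_add, le_div_iff₀ hs,
    div_lt_iff₀ hs]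
  constructor <;> rintro ⟨h₁, h₂⟩ <;> constructor <;> linarith

lemma exists_Icc_subset_Ico_of_forall_notMem_Ioc {s : ℝ} (hs : 0 < s) {t a b : ℝ}
    (h : ∀ w : ℤ, s * (w + t) ∉ Ioc a b) :
    ∃ z : ℤ, Icc a b ⊆ Ico (s * (z + t)) (s * (z + t) + s) := by
  have hb := (mem_Ico_mul_iff_floor_eq hs t b ⌊b / s - t⌋).2 rfl
  have ha : s * (⌊b / s - t⌋ + t) ≤ a := by
    by_contra! ha
    exact h _ ⟨ha, hb.1⟩
  exact ⟨_, Icc_subset_Ico ha hb.2⟩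

lemma Ico_add_mul_subset_or_disjoint {l : ℝ} (hl : 0 < l) (a : ℝ) (w : ℤ) (N : ℕ) :
    Ico (a + l * w) (a + l * w + l) ⊆ Ico a (a + l * N) ∨
      Disjoint (Ico (a + l * w) (a + l * w + l)) (Ico a (a + l * N)) := by
  by_cases hw : 0 ≤ w ∧ w < N
  · have h₀ : (0 : ℝ) ≤ w := by exact_mod_cast hw.1
    have h₁ : (w : ℝ) + 1 ≤ N := by exact_mod_cast hw.2
    exact .inl (Ico_subset_Ico (by nlinarith) (by nlinarith))
  · refine .inr (Ico_disjoint_Ico.2 ?_)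
    rcases not_and_or.1 hw with hw | hw
    · have : (w : ℝ) + 1 ≤ 0 := by exact_mod_cast (not_le.1 hw)
      exact (min_le_left _ _).trans (le_trans (by nlinarith) (le_max_right _ _))
    · have : (N : ℝ) ≤ w := by exact_mod_cast (not_lt.1 hw)
      exact (min_le_right _ _).trans (le_trans (by nlinarith) (le_max_left _ _))

namespace Cube

variable {n : ℕ}

lemma set_subset_or_inter_eq_empty {Q Q' : Cube n}
    (h : ∀ i, Ico (Q'.c i) (Q'.c i + Q'.s) ⊆ Ico (Q.c i) (Q.c i + Q.s) ∨
      Disjoint (Ico (Q'.c i) (Q'.c i + Q'.s)) (Ico (Q.c i) (Q.c i + Q.s))) :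
    Q'.set ⊆ Q.set ∨ Q.set ∩ Q'.set = ∅ := by
  by_cases hsub : ∀ i, Ico (Q'.c i) (Q'.c i + Q'.s) ⊆ Ico (Q.c i) (Q.c i + Q.s)
  · exact .inl fun y hy i => hsub i (hy i)
  · push Not at hsub
    obtain ⟨i, hi⟩ := hsub
    refine .inr (eq_empty_iff_forall_notMem.2 fun y hy => ?_)
    exact disjoint_left.1 ((h i).resolve_left hi) (hy.2 i) (hy.1 i)

lemma ball_subset_set {Q : Cube n} {x : EuclideanSpace ℝ (Fin n)} {r : ℝ}
    (h : ∀ i, Icc (x i - r) (x i + r) ⊆ Ico (Q.c i) (Q.c i + Q.s)) :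
    Metric.ball x r ⊆ Q.set := by
  intro y hy i
  have hyi := (PiLp.dist_apply_le y x i).trans_lt hy
  rw [Real.dist_eq, abs_lt] at hyi
  exact h i ⟨by linarith, by linarith⟩

lemma diam_set_le (Q : Cube n) (hs : 0 ≤ Q.s) : Metric.diam Q.set ≤ √n * Q.s := by
  refine Metric.diam_le_of_forall_dist_le (by positivity) fun y hy y' hy' => ?_
  have hcoord : ∀ i, dist (y i) (y' i) ^ 2 ≤ Q.s ^ 2 := fun i => by
    obtain ⟨h₁, h₂⟩ := hy i
    obtain ⟨h₁', h₂'⟩ := hy' i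
    rw [Real.dist_eq, sq_abs]
    exact sq_le_sq' (by linarith) (by linarith)
  calc dist y y' = √(∑ i, dist (y i) (y' i) ^ 2) := EuclideanSpace.dist_eq y y'
    _ ≤ √(∑ _i : Fin n, Q.s ^ 2) := Real.sqrt_le_sqrt (Finset.sum_le_sum fun i _ => hcoord i)
    _ = √n * Q.s := by simp [Real.sqrt_mul, Real.sqrt_sq hs]

end Cube

section Grid

variable {n : ℕ}

noncomputable def gridCube (t : ℤ → ℝ) (k : ℤ) (z : Fin n → ℤ) : Cube n :=
  ⟨WithLp.toLp 2 fun i => 2 ^ (-k) * (z i + t k), 2 ^ (-k)⟩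

def gridFiltration (n : ℕ) (t : ℤ → ℝ) : Set (Cube n) :=
  {Q | ∃ k z, gridCube t k z = Q}

lemma existsUnique_mem_gridFiltration (t : ℤ → ℝ) (k : ℤ) (x : EuclideanSpace ℝ (Fin n)) :
    ∃! Q : Cube n, Q ∈ gridFiltration n t ∧ Q.s = 2 ^ (-k) ∧ x ∈ Q.set := by
  have hs : (0 : ℝ) < 2 ^ (-k) := by positivity
  have hmem (z : Fin n → ℤ) :
      x ∈ (gridCube t k z).set ↔ z = fun i => ⌊x i / 2 ^ (-k) - t k⌋ :=
    (forall_congr' fun i => (mem_Ico_mul_iff_floor_eq hs (t k) (x i) (z i)).trans eq_comm).trans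
      funext_iff.symm
  refine ⟨gridCube t k _, ⟨⟨k, _, rfl⟩, rfl, (hmem _).2 rfl⟩, ?_⟩
  rintro _ ⟨⟨k', z, rfl⟩, hk, hx⟩
  obtain rfl : k' = k := neg_inj.1 (zpow_right_injective₀ two_pos (by norm_num) hk)
  rw [(hmem z).1 hx]

variable {t : ℤ → ℝ} (ht : ∀ k (d : ℕ), ∃ j : ℤ, 2 ^ d * t k - t (k + d) = j)
include ht

lemma gridCube_set_subset_or_inter_eq_empty (k : ℤ) (d : ℕ) (z z' : Fin n → ℤ) :
    (gridCube t (k + d) z').set ⊆ (gridCube t k z).set ∨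
      (gridCube t k z).set ∩ (gridCube t (k + d) z').set = ∅ := by
  obtain ⟨j, hj⟩ := ht k d
  have hl : (0 : ℝ) < 2 ^ (-(k + d)) := by positivity
  have hscale : (2 : ℝ) ^ (-(k + d)) * (2 ^ d : ℕ) = 2 ^ (-k) := by
    rw [Nat.cast_pow, Nat.cast_ofNat, ← zpow_natCast, ← zpow_add₀ two_ne_zero]
    ring_nf
  refine Cube.set_subset_or_inter_eq_empty fun i => ?_
  have hc : 2 ^ (-(k + d)) * (z' i + t (k + d)) =
      2 ^ (-k) * (z i + t k) + 2 ^ (-(k + d)) * ((z' i - j - 2 ^ d * z i : ℤ) : ℝ) := by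
    rw [← hscale]
    push_cast
    linear_combination -(2 : ℝ) ^ (-(k + d)) * hj
  have := Ico_add_mul_subset_or_disjoint hl (2 ^ (-k) * (z i + t k))
    (z' i - j - 2 ^ d * z i) (2 ^ d)
  rwa [hscale, ← hc] at this

theorem isDyadicFiltration_gridFiltration : IsDyadicFiltration (gridFiltration n t) := by
  refine ⟨?_, existsUnique_mem_gridFiltration t, ?_⟩
  · rintro _ ⟨k, z, rfl⟩
    exact ⟨k, rfl⟩
  · rintro _ ⟨k, z, rfl⟩ _ ⟨k', z', rfl⟩
    rcases le_total k k' with h | h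
    · obtain ⟨d, rfl⟩ := Int.le.dest h
      rcases gridCube_set_subset_or_inter_eq_empty ht k d z z' with h | h
      exacts [.inr (.inl h), .inr (.inr h)]
    · obtain ⟨d, rfl⟩ := Int.le.dest h
      rcases gridCube_set_subset_or_inter_eq_empty ht k' d z' z with h | h
      exacts [.inl h, .inr (.inr (inter_comm _ _ ▸ h))]

end Grid

section ShiftOffset

variable {p : ℕ} (hp : Odd p)

noncomputable def twoZPowMod (k : ℤ) : ℕ :=
  ((ZMod.unitOfCoprime 2 hp.coprime_two_left ^ k : (ZMod p)ˣ) : ZMod p).val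

lemma natCast_twoZPowMod (k : ℤ) :
    (twoZPowMod hp k : ZMod p) =
      ((ZMod.unitOfCoprime 2 hp.coprime_two_left ^ k : (ZMod p)ˣ) : ZMod p) :=
  haveI : NeZero p := ⟨hp.pos.ne'⟩
  ZMod.natCast_zmod_val _

lemma dvd_two_pow_mul_twoZPowMod_sub (k : ℤ) (d : ℕ) :
    (p : ℤ) ∣ 2 ^ d * twoZPowMod hp k - twoZPowMod hp (k + d) := by
  rw [← ZMod.intCast_zmod_eq_zero_iff_dvd]
  push_cast
  rw [natCast_twoZPowMod, natCast_twoZPowMod, zpow_add, zpow_natCast, Units.val_mul,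
    Units.val_pow_eq_pow_val, ZMod.coe_unitOfCoprime]
  push_cast
  ring

lemma not_dvd_sub_mul_twoZPowMod {a b : ℕ} (ha : a < p) (hb : b < p) (hab : a ≠ b) (k : ℤ) :
    ¬ (p : ℤ) ∣ ((a : ℤ) - b) * twoZPowMod hp k := by
  rw [← ZMod.intCast_zmod_eq_zero_iff_dvd]
  push_cast
  rw [natCast_twoZPowMod, Units.mul_left_eq_zero, sub_eq_zero]
  intro h
  simpa [ZMod.val_cast_of_lt ha, ZMod.val_cast_of_lt hb, hab] using congrArg ZMod.val h

noncomputable def shiftOffset (m : ℕ) (k : ℤ) : ℝ := m * twoZPowMod hp k / p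

lemma exists_two_pow_mul_shiftOffset_sub_eq_int (m : ℕ) (k : ℤ) (d : ℕ) :
    ∃ j : ℤ, 2 ^ d * shiftOffset hp m k - shiftOffset hp m (k + d) = j := by
  obtain ⟨c, hc⟩ := dvd_two_pow_mul_twoZPowMod_sub hp k d
  have hc' : (2 : ℝ) ^ d * twoZPowMod hp k - twoZPowMod hp (k + d) = p * c := by
    exact_mod_cast hc
  have hp₀ : (p : ℝ) ≠ 0 := by exact_mod_cast hp.pos.ne'
  refine ⟨m * c, ?_⟩
  simp only [shiftOffset]
  push_cast
  field_simp
  linear_combination (m : ℝ) * hc'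

lemma div_le_abs_sub_shiftOffset {s : ℝ} (hs : 0 < s) {m m' : ℕ} (hm : m < p) (hm' : m' < p)
    (hne : m ≠ m') (k w w' : ℤ) :
    s / p ≤ |s * (w + shiftOffset hp m k) - s * (w' + shiftOffset hp m' k)| := by
  set N : ℤ := p * (w - w') + ((m : ℤ) - m') * twoZPowMod hp k
  have hN : N ≠ 0 := fun h =>
    not_dvd_sub_mul_twoZPowMod hp hm hm' hne k ⟨w' - w, by linear_combination h⟩
  have hp₀ : (0 : ℝ) < p := by exact_mod_cast hp.pos
  have hdiff : s * (w + shiftOffset hp m k) - s * (w' + shiftOffset hp m' k) = s / p * N := by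
    simp only [shiftOffset, N]
    push_cast
    field_simp
    ring
  rw [hdiff, abs_mul, abs_of_pos (by positivity), ← Int.cast_abs]
  exact le_mul_of_one_le_right (by positivity) (by exact_mod_cast Int.one_le_abs hN)

lemma exists_forall_shiftOffset_notMem_Ioc {n : ℕ} (hnp : n < p) {s : ℝ} (hs : 0 < s) (k : ℤ)
    {a b : Fin n → ℝ} (hab : ∀ i, b i - a i < s / p) :
    ∃ m : Fin (n + 1), ∀ i (w : ℤ), s * (w + shiftOffset hp m k) ∉ Ioc (a i) (b i) := by
  by_contra! hbad
  choose i w hw using hbad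
  obtain ⟨m, m', hne, him⟩ := Fintype.exists_ne_map_eq_of_card_lt i (by simp)
  have hsep := div_le_abs_sub_shiftOffset hp hs (by omega) (by omega) (Fin.val_injective.ne hne)
    k (w m) (w m')
  obtain ⟨h₁, h₂⟩ := hw m
  obtain ⟨h₁', h₂'⟩ := hw m'
  rw [← him] at h₁' h₂'
  have hclose : |s * (w m + shiftOffset hp m k) - s * (w m' + shiftOffset hp m' k)| < s / p :=
    abs_sub_lt_iff.2 ⟨by linarith [hab (i m)], by linarith [hab (i m)]⟩
  exact hclose.not_ge hsep

lemma exists_ball_subset_gridCube_shiftOffset {n : ℕ} (hnp : n < p)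
    (x : EuclideanSpace ℝ (Fin n)) {r : ℝ} {k : ℤ} (hk : 2 * r * p < 2 ^ (-k)) :
    ∃ m : Fin (n + 1), ∃ z, Metric.ball x r ⊆ (gridCube (shiftOffset hp m) k z).set := by
  have hs : (0 : ℝ) < 2 ^ (-k) := by positivity
  have hp₀ : (0 : ℝ) < p := by exact_mod_cast hp.pos
  obtain ⟨m, hm⟩ := exists_forall_shiftOffset_notMem_Ioc hp hnp hs k
    (a := fun i => x i - r) (b := fun i => x i + r)
    fun i => by rw [lt_div_iff₀ hp₀]; linarith
  choose z hz using fun i => exists_Icc_subset_Ico_of_forall_notMem_Ioc hs (hm i)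
  exact ⟨m, z, Cube.ball_subset_set hz⟩

end ShiftOffset

/-- Theorem A (existence): there exist `n+1` dyadic filtrations of `ℝⁿ` such
that every Euclidean ball `B` is contained in a cube `Q` of one of them with
`diam Q ≤ c_n · diam B`, where `c_n = 2 pₙ √n`. -/
theorem stmt_6 (n : ℕ) :
    ∃ 𝒜 : Fin (n + 1) → Set (Cube n),
      (∀ m, IsDyadicFiltration (𝒜 m)) ∧
      ∀ (x : EuclideanSpace ℝ (Fin n)) (r : ℝ), 0 < r →
        ∃ m, ∃ Q ∈ 𝒜 m, Metric.ball x r ⊆ Q.set ∧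
          Metric.diam Q.set ≤ cN n * (2 * r) := by
  have hp := pn_odd n
  have hp₀ : (0 : ℝ) < pn n := by exact_mod_cast hp.pos
  refine ⟨fun m => gridFiltration n (shiftOffset hp m), fun m =>
    isDyadicFiltration_gridFiltration (exists_two_pow_mul_shiftOffset_sub_eq_int hp m),
    fun x r hr => ?_⟩
  obtain ⟨k, hk, hk'⟩ := exists_lt_two_zpow_neg_le (by positivity : 0 < 2 * r * pn n)
  obtain ⟨m, z, hball⟩ := exists_ball_subset_gridCube_shiftOffset hp (lt_pn n) x hk
  refine ⟨m, _, ⟨k, z, rfl⟩, hball, ?_⟩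
  calc Metric.diam (gridCube (shiftOffset hp m) k z).set
      ≤ √n * 2 ^ (-k) := Cube.diam_set_le _ (zpow_pos two_pos _).le
    _ ≤ √n * (2 * (2 * r * pn n)) := by gcongr
    _ = cN n * (2 * r) := by rw [cN]; ring
end

section
/- No family of n dyadic filtrations of R^n suffices for the dyadic covering: for any n dyadic filtrations A_1, ..., A_n of R^n and any constant c > 0, there exists a Euclidean ball B such that no cube Q in the union of the filtrations satisfies B ⊂ Q and diam(Q) <= c * diam(B). -/
open MeasureTheory

/-!
Probe filtration `m` at scale `sₘ = 2^{-(3m+1)}`. Inductively build a point `x` such that, for every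
`m`, `x` lies in the cube `Dₘ ∈ 𝒜 m` of side `sₘ` and on its lower face in direction `m`: step `m`
pins coordinate `m` on that face and moves the later coordinates to the middle of `Dₘ`, so the
later moves, of size at most `s_{m+1} + s_{m+2} + ⋯ < sₘ / 2`, stay inside `Dₘ`.

Let `Q ∈ 𝒜 m` contain a ball `B(x, r)`. If `Q` is not larger than `Dₘ`, nestedness puts `Q` inside
`Dₘ`, so the lower corner of `Q` in direction `m` is at least `xₘ`, while `B(x, r) ⊆ Q` forces it
below `xₘ`. Otherwise `diam Q ≥ side Q > sₘ ≥ s_{n-1}`, which beats `c · 2r` once `r` is small.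
-/

open Metric

namespace Cube

variable {n : ℕ}

lemma corner_mem {Q : Cube n} (hs : 0 < Q.s) : Q.c ∈ Q.set :=
  fun _ => ⟨le_rfl, lt_add_of_pos_right _ hs⟩

lemma isBounded_set (Q : Cube n) : Bornology.IsBounded Q.set :=
  ((PiLp.antilipschitzWith_ofLp 2 _).isBounded_preimage
    (Bornology.IsBounded.pi fun i => isBounded_Ico (Q.c i) (Q.c i + Q.s))).subset
    fun _ hy i _ => hy i

lemma add_single_mem {Q : Cube n} {x : EuclideanSpace ℝ (Fin n)} (hx : x ∈ Q.set) {i : Fin n}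
    {t : ℝ} (h₁ : Q.c i ≤ x i + t) (h₂ : x i + t < Q.c i + Q.s) :
    x + EuclideanSpace.single i t ∈ Q.set := by
  intro j
  by_cases hj : j = i
  · subst hj; simpa using ⟨h₁, h₂⟩
  · simpa [hj] using hx j

lemma side_le_diam (Q : Cube n) (i : Fin n) : Q.s ≤ diam Q.set := by
  refine le_of_forall_lt_imp_le_of_dense fun t ht => ?_
  rcases lt_or_ge t 0 with ht₀ | ht₀
  · exact ht₀.le.trans diam_nonneg
  have hs : 0 < Q.s := ht₀.trans_lt ht
  have hmem : Q.c + EuclideanSpace.single i t ∈ Q.set :=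
    add_single_mem (corner_mem hs) (by linarith) (by linarith)
  simpa [abs_of_nonneg ht₀] using dist_le_diam_of_mem Q.isBounded_set hmem (corner_mem hs)

lemma corner_lt_of_ball_subset {Q : Cube n} {x : EuclideanSpace ℝ (Fin n)} {r : ℝ} (hr : 0 < r)
    (h : ball x r ⊆ Q.set) (i : Fin n) : Q.c i < x i := by
  have hmem : x + EuclideanSpace.single i (-(r / 2)) ∈ ball x r := by
    simpa [abs_of_pos hr] using half_lt_self hr
  have := (h hmem i).1
  simp only [PiLp.add_apply, PiLp.single_eq_same] at this
  linarith

lemma corner_le_of_subset {Q D : Cube n} (h : D.set ⊆ Q.set) (hD : 0 < D.s) (i : Fin n) :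
    Q.c i ≤ D.c i :=
  (h (corner_mem hD) i).1

lemma top_le_of_subset {Q D : Cube n} (h : D.set ⊆ Q.set) (hD : 0 < D.s) (i : Fin n) :
    D.c i + D.s ≤ Q.c i + Q.s := by
  refine le_of_forall_lt_imp_le_of_dense fun t ht => ?_
  by_contra! hQt
  have hmem : D.c + EuclideanSpace.single i (max 0 (t - D.c i)) ∈ D.set :=
    add_single_mem (corner_mem hD) (by simp)
      (by rw [add_lt_add_iff_left, max_lt_iff]; exact ⟨hD, by linarith⟩)
  have := (h hmem i).2
  simp only [PiLp.add_apply, PiLp.single_eq_same] at this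
  linarith [le_max_right 0 (t - D.c i)]

noncomputable def lowerFacePoint (D : Cube n) (x : EuclideanSpace ℝ (Fin n)) (k : ℕ) :
    EuclideanSpace ℝ (Fin n) :=
  WithLp.toLp 2 fun i =>
    if (i : ℕ) < k then x i else if (i : ℕ) = k then D.c i else D.c i + D.s / 2

variable {D : Cube n} {x : EuclideanSpace ℝ (Fin n)} {k : ℕ}

lemma abs_lowerFacePoint_sub_le (hx : x ∈ D.set) (i : Fin n) :
    |D.lowerFacePoint x k i - x i| ≤ D.s := by
  have := hx i
  simp only [lowerFacePoint, PiLp.toLp_apply]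
  split_ifs <;> rw [abs_le] <;> constructor <;> linarith

lemma mem_of_near_lowerFacePoint (hx : x ∈ D.set) {y : EuclideanSpace ℝ (Fin n)}
    (hy₁ : ∀ i : Fin n, (i : ℕ) ≤ k → y i = D.lowerFacePoint x k i)
    (hy₂ : ∀ i, |y i - D.lowerFacePoint x k i| < D.s / 2) : y ∈ D.set := by
  intro i
  have hxi := hx i
  have hyi := abs_lt.1 (hy₂ i)
  rcases lt_trichotomy (i : ℕ) k with hi | hi | hi
  · rw [hy₁ i hi.le]
    simpa [lowerFacePoint, hi] using hxi
  · rw [hy₁ i hi.le]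
    simp only [lowerFacePoint, PiLp.toLp_apply, hi, lt_irrefl, if_false, if_true]
    constructor <;> linarith
  · simp only [lowerFacePoint, PiLp.toLp_apply, hi.not_gt, hi.ne', if_false] at hyi
    constructor <;> linarith

end Cube

namespace IsDyadicFiltration

variable {n : ℕ} {F : Set (Cube n)}

lemma side_pos (hF : IsDyadicFiltration F) {Q : Cube n} (hQ : Q ∈ F) : 0 < Q.s := by
  obtain ⟨k, hk⟩ := hF.1 Q hQ
  exact hk ▸ zpow_pos two_pos _

lemma subset_of_side_le (hF : IsDyadicFiltration F) {Q D : Cube n} (hQ : Q ∈ F) (hD : D ∈ F)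
    (hle : Q.s ≤ D.s) {x : EuclideanSpace ℝ (Fin n)} (hxQ : x ∈ Q.set) (hxD : x ∈ D.set) :
    Q.set ⊆ D.set := by
  rcases hF.2.2 Q hQ D hD with h | h | h
  · exact h
  · intro y hy i
    have h₁ := Cube.corner_le_of_subset h (hF.side_pos hD) i
    have h₂ := Cube.top_le_of_subset h (hF.side_pos hD) i
    have := hy i
    constructor <;> linarith
  · exact (h.subset ⟨hxQ, hxD⟩).elim

end IsDyadicFiltration

noncomputable def probeScale (k : ℕ) : ℝ := (2 : ℝ) ^ (-(3 * k + 1 : ℤ))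

lemma probeScale_pos (k : ℕ) : 0 < probeScale k :=
  zpow_pos two_pos _

lemma probeScale_succ (k : ℕ) : probeScale (k + 1) = probeScale k / 8 := by
  rw [probeScale, probeScale, div_eq_mul_inv, show (8 : ℝ)⁻¹ = 2 ^ (-3 : ℤ) by norm_num,
    ← zpow_add₀ two_ne_zero]
  push_cast
  ring_nf

lemma probeScale_anti {k l : ℕ} (h : k ≤ l) : probeScale l ≤ probeScale k :=
  zpow_le_zpow_right₀ one_le_two (by omega)


section Construction

variable {n : ℕ}

/-- The slack `2 * probeScale k` in the coordinates not yet pinned is what the later steps of the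
construction spend. -/
def OnLowerFaces (𝒜 : Fin n → Set (Cube n)) (k : ℕ) (x : EuclideanSpace ℝ (Fin n)) : Prop :=
  ∀ m : Fin n, (m : ℕ) < k → ∃ D ∈ 𝒜 m, D.s = probeScale m ∧ x m = D.c m ∧
    ∀ y : EuclideanSpace ℝ (Fin n), (∀ i : Fin n, (i : ℕ) < k → y i = x i) →
      (∀ i, |y i - x i| ≤ 2 * probeScale k) → y ∈ D.set

namespace OnLowerFaces

variable {𝒜 : Fin n → Set (Cube n)} {k : ℕ} {x : EuclideanSpace ℝ (Fin n)}

lemma exists_cube (hx : OnLowerFaces 𝒜 k x) (m : Fin n) (hm : (m : ℕ) < k) :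
    ∃ D ∈ 𝒜 m, D.s = probeScale m ∧ x m = D.c m ∧ x ∈ D.set := by
  obtain ⟨D, hD, hDs, hxm, hrobust⟩ := hx m hm
  exact ⟨D, hD, hDs, hxm,
    hrobust x (fun _ _ => rfl) fun _ => by simpa using (probeScale_pos k).le⟩

lemma succ (hk : k < n) (hx : OnLowerFaces 𝒜 k x) {D : Cube n} (hD : D ∈ 𝒜 ⟨k, hk⟩)
    (hDs : D.s = probeScale k) (hxD : x ∈ D.set) :
    OnLowerFaces 𝒜 (k + 1) (D.lowerFacePoint x k) := by
  have hs := probeScale_succ k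
  have hpos := probeScale_pos k
  intro m hm
  rcases Nat.lt_succ_iff_lt_or_eq.1 hm with hm | hm
  · obtain ⟨E, hE, hEs, hxm, hrobust⟩ := hx m hm
    refine ⟨E, hE, hEs, by simpa [Cube.lowerFacePoint, hm] using hxm, fun y hy₁ hy₂ => ?_⟩
    refine hrobust y
      (fun i hi => by simpa [Cube.lowerFacePoint, hi] using hy₁ i (hi.trans k.lt_succ_self))
      fun i => ?_
    have := Cube.abs_lowerFacePoint_sub_le (k := k) hxD i
    calc |y i - x i| ≤ |y i - D.lowerFacePoint x k i| + |D.lowerFacePoint x k i - x i| :=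
          abs_sub_le _ _ _
      _ ≤ 2 * probeScale (k + 1) + D.s := add_le_add (hy₂ i) this
      _ ≤ 2 * probeScale k := by rw [hs, hDs]; linarith
  · obtain rfl : m = ⟨k, hk⟩ := Fin.ext hm
    refine ⟨D, hD, hDs, by simp [Cube.lowerFacePoint], fun y hy₁ hy₂ => ?_⟩
    refine Cube.mem_of_near_lowerFacePoint hxD (fun i hi => hy₁ i (Nat.lt_succ_of_le hi))
      fun i => (hy₂ i).trans_lt ?_
    rw [hs, hDs]
    linarith

end OnLowerFaces

lemma exists_onLowerFaces {𝒜 : Fin n → Set (Cube n)}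
    (hcover : ∀ m (y : EuclideanSpace ℝ (Fin n)), ∃ D ∈ 𝒜 m, D.s = probeScale m ∧ y ∈ D.set) :
    ∀ k ≤ n, ∃ x, OnLowerFaces 𝒜 k x
  | 0, _ => ⟨0, fun _ hm => absurd hm (Nat.not_lt_zero _)⟩
  | k + 1, hk => by
    obtain ⟨x, hx⟩ := exists_onLowerFaces hcover k (by omega)
    obtain ⟨D, hD, hDs, hxD⟩ := hcover ⟨k, hk⟩ x
    exact ⟨_, hx.succ hk hD hDs hxD⟩

end Construction

/-- Theorem A (optimality): no family of `n` dyadic filtrations of `ℝⁿ`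
suffices: for every constant `c > 0` there is a ball contained in no cube `Q`
of the filtrations with `diam Q ≤ c · diam B`. -/
theorem stmt_7 (n : ℕ) (𝒜 : Fin n → Set (Cube n))
    (h𝒜 : ∀ m, IsDyadicFiltration (𝒜 m)) (c : ℝ) (hc : 0 < c) :
    ∃ (x : EuclideanSpace ℝ (Fin n)) (r : ℝ), 0 < r ∧
      ∀ m, ∀ Q ∈ 𝒜 m,
        ¬ (Metric.ball x r ⊆ Q.set ∧ Metric.diam Q.set ≤ c * (2 * r)) := by
  obtain ⟨x, hx⟩ := exists_onLowerFaces (fun m y => ((h𝒜 m).2.1 _ y).exists) n le_rfl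
  set r := probeScale n / (4 * c) with hr_def
  have hr : 0 < r := div_pos (probeScale_pos n) (by positivity)
  refine ⟨x, r, hr, fun m Q hQ ⟨hball, hdiam⟩ => ?_⟩
  obtain ⟨D, hD, hDs, hxm, hxD⟩ := hx.exists_cube m m.isLt
  have hxQ : x ∈ Q.set := hball (mem_ball_self hr)
  have hQc := Cube.corner_lt_of_ball_subset hr hball m
  rcases le_or_gt Q.s D.s with hle | hlt
  · have hQD := (h𝒜 m).subset_of_side_le hQ hD hle hxQ hxD
    linarith [Cube.corner_le_of_subset hQD ((h𝒜 m).side_pos hQ) m]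
  · have hscale : probeScale n ≤ probeScale m := probeScale_anti m.isLt.le
    have hcr : c * (2 * r) = probeScale n / 2 := by rw [hr_def]; field_simp; ring
    linarith [Q.side_le_diam m, probeScale_pos n]
end

section
/- Let mu be a Borel measure on R^n with k-dimensional polynomial growth: mu(B(x,r)) <= c_mu * r^k for all x and r > 0, where 0 < k <= n. Let alpha > 1 and beta > (c_n * alpha)^k, and let A be the union of the n+1 dyadic filtrations from Theorem A (with constant c_n). Then for every x in supp(mu) and every r > 0 there exists an (alpha, beta)-doubling cube Q in A with x in Q and side length l(Q) > r. -/
open MeasureTheory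

/-!
Suppose every cube of `𝒜` that contains `x` and has side `> r` fails to be doubling. Start from a
cube `Q₀ ⊇ B(x, r)`. If `Q` is not doubling, the ball circumscribing `αQ`, slightly enlarged, lies
in a cube `Q' ∈ 𝒜` with `l(Q') ≤ γ l(Q)`, where `c_n α < γ` and `γ^k < β`; then `μ(Q') > β μ(Q)`.
Iterating, `μ(Q_N) ≥ β^N μ(B(x, r))` while polynomial growth bounds `μ(Q_N)` by a multiple of
`(γ^k)^N`, which is impossible since `μ(B(x, r)) > 0`.
-/

open Metric
open scoped ENNReal

theorem Real.exists_lt_rpow_lt_of_rpow_lt {a b k : ℝ} (ha : 0 ≤ a) (hk : 0 < k)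
    (h : a ^ k < b) : ∃ γ, a < γ ∧ γ ^ k < b := by
  have hb : 0 ≤ b := (Real.rpow_nonneg ha k).trans h.le
  obtain ⟨γ, haγ, hγb⟩ := exists_between ((Real.lt_rpow_inv_iff_of_pos ha hb hk).2 h)
  exact ⟨γ, haγ, (Real.lt_rpow_inv_iff_of_pos (ha.trans haγ.le) hb hk).1 hγb⟩

theorem EuclideanSpace.dist_le_mul_sqrt_card {n : ℕ} {x y : EuclideanSpace ℝ (Fin n)} {s : ℝ}
    (hs : 0 ≤ s) (h : ∀ i, |x i - y i| ≤ s) : dist x y ≤ s * √n := by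
  have hsum : ∑ i, dist (x i) (y i) ^ 2 ≤ n * s ^ 2 := by
    simpa [Real.dist_eq] using
      Finset.sum_le_sum (s := Finset.univ) fun i _ ↦ pow_le_pow_left₀ (abs_nonneg _) (h i) 2
  calc dist x y = √(∑ i, dist (x i) (y i) ^ 2) := EuclideanSpace.dist_eq x y
    _ ≤ √(n * s ^ 2) := Real.sqrt_le_sqrt hsum
    _ = s * √n := by rw [Real.sqrt_mul (Nat.cast_nonneg n), Real.sqrt_sq hs, mul_comm]

theorem exists_chain_of_forall_exists_step {ι : Type*} {P : ι → Prop} {size : ι → ℝ}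
    {mass : ι → ℝ≥0∞} {γ : ℝ} {b : ℝ≥0∞} (hγ : 0 ≤ γ)
    (step : ∀ i, P i → ∃ j, P j ∧ size j ≤ γ * size i ∧ b * mass i ≤ mass j)
    {i₀ : ι} (h₀ : P i₀) (N : ℕ) :
    ∃ i, P i ∧ size i ≤ γ ^ N * size i₀ ∧ b ^ N * mass i₀ ≤ mass i := by
  induction N with
  | zero => exact ⟨i₀, h₀, by simp, by simp⟩
  | succ N ih =>
    obtain ⟨i, hi, hsize, hmass⟩ := ih
    obtain ⟨j, hj, hsize', hmass'⟩ := step i hi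
    refine ⟨j, hj, ?_, ?_⟩
    · calc size j ≤ γ * (γ ^ N * size i₀) := hsize'.trans (by gcongr)
        _ = γ ^ (N + 1) * size i₀ := by ring
    · calc b ^ (N + 1) * mass i₀ = b * (b ^ N * mass i₀) := by ring
        _ ≤ mass j := (by gcongr : _ ≤ b * mass i).trans hmass'

theorem not_forall_ofReal_pow_mul_le {a b C : ℝ} {m : ℝ≥0∞} (hm : m ≠ 0) (hb : 0 < b)
    (hba : b < a) : ¬ ∀ N : ℕ, ENNReal.ofReal a ^ N * m ≤ ENNReal.ofReal (C * b ^ N) := by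
  intro h
  have hm_top : m ≠ ⊤ := ne_top_of_le_ne_top ENNReal.ofReal_ne_top (by simpa using h 0)
  have hm₀ : 0 < m.toReal := ENNReal.toReal_pos hm hm_top
  obtain ⟨N, hN⟩ := pow_unbounded_of_one_lt (C / m.toReal) ((one_lt_div hb).2 hba)
  have ha : 0 < a := hb.trans hba
  have hle : a ^ N * m.toReal ≤ C * b ^ N := by
    have := h N
    rw [← ENNReal.ofReal_toReal hm_top, ← ENNReal.ofReal_pow ha.le,
      ← ENNReal.ofReal_mul (by positivity)] at this
    exact (ENNReal.ofReal_le_ofReal_iff'.1 this).resolve_right (not_le.2 (by positivity))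
  rw [div_pow, div_lt_div_iff₀ hm₀ (pow_pos hb N)] at hN
  linarith

theorem cN_pos {n : ℕ} (hn : 0 < n) : 0 < cN n := by
  have : 0 < √n := Real.sqrt_pos.2 (by exact_mod_cast hn)
  unfold cN pn
  split_ifs <;> positivity

namespace Cube

variable {n : ℕ}

noncomputable def center (Q : Cube n) : EuclideanSpace ℝ (Fin n) :=
  WithLp.toLp 2 fun i ↦ Q.c i + Q.s / 2

def IsDoubling (μ : Measure (EuclideanSpace ℝ (Fin n))) (α β : ℝ) (Q : Cube n) : Prop :=
  μ (Q.dilate α).set ≤ ENNReal.ofReal β * μ Q.set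

/-- The covering property of Theorem A, with constant `c`: every ball `B` lies in a cube of `𝒬`
of diameter at most `c · diam B`. -/
def CoversBalls (c : ℝ) (𝒬 : Set (Cube n)) : Prop :=
  ∀ (z : EuclideanSpace ℝ (Fin n)) (ρ : ℝ), 0 < ρ →
    ∃ Q ∈ 𝒬, ball z ρ ⊆ Q.set ∧ diam Q.set ≤ c * (2 * ρ)

@[simp]
theorem dilate_s (Q : Cube n) (t : ℝ) : (Q.dilate t).s = t * Q.s := rfl

@[simp]
theorem center_dilate (Q : Cube n) (t : ℝ) : (Q.dilate t).center = Q.center := by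
  ext i
  simp only [center, dilate, PiLp.toLp_apply]
  ring

theorem side_pos_of_mem (hn : 0 < n) {Q : Cube n} {x : EuclideanSpace ℝ (Fin n)}
    (hx : x ∈ Q.set) : 0 < Q.s := by
  obtain ⟨h₁, h₂⟩ := hx ⟨0, hn⟩
  linarith

theorem set_subset_dilate {Q : Cube n} {t : ℝ} (ht : 1 ≤ t) (hs : 0 ≤ Q.s) :
    Q.set ⊆ (Q.dilate t).set := by
  intro y hy i
  obtain ⟨h₁, h₂⟩ := hy i
  simp only [dilate, PiLp.toLp_apply]
  constructor <;> nlinarith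

theorem set_subset_closedBall_center {Q : Cube n} (hs : 0 ≤ Q.s) :
    Q.set ⊆ closedBall Q.center (Q.s / 2 * √n) := by
  refine fun y hy ↦ EuclideanSpace.dist_le_mul_sqrt_card (by positivity) fun i ↦ ?_
  obtain ⟨h₁, h₂⟩ := hy i
  simp only [center, PiLp.toLp_apply]
  rw [abs_le]
  constructor <;> linarith

theorem dilate_set_subset_closedBall {Q : Cube n} {t : ℝ} (hs : 0 ≤ t * Q.s) :
    (Q.dilate t).set ⊆ closedBall Q.center (t * Q.s / 2 * √n) := by
  simpa using set_subset_closedBall_center (Q := Q.dilate t) hs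

theorem set_subset_closedBall_of_mem {Q : Cube n} {x : EuclideanSpace ℝ (Fin n)}
    (hx : x ∈ Q.set) (hs : 0 ≤ Q.s) : Q.set ⊆ closedBall x (Q.s * √n) := by
  refine fun y hy ↦ EuclideanSpace.dist_le_mul_sqrt_card hs fun i ↦ ?_
  obtain ⟨h₁, h₂⟩ := hy i
  obtain ⟨h₃, h₄⟩ := hx i
  rw [abs_le]
  constructor <;> linarith

theorem two_mul_le_side_of_ball_subset (hn : 0 < n) {Q : Cube n}
    {z : EuclideanSpace ℝ (Fin n)} {ρ : ℝ} (hρ : 0 < ρ) (h : ball z ρ ⊆ Q.set) :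
    2 * ρ ≤ Q.s := by
  let i : Fin n := ⟨0, hn⟩
  suffices ∀ η, 0 ≤ η → η < ρ → 2 * η ≤ Q.s by
    refine le_of_forall_lt_imp_le_of_dense fun a ha ↦ ?_
    have := this (max (a / 2) 0) (le_max_right _ _) (max_lt (by linarith) hρ)
    linarith [le_max_left (a / 2) 0]
  intro η hη hηρ
  have hmem : ∀ t, |t| < ρ → z + EuclideanSpace.single i t ∈ Q.set := fun t ht ↦
    h (by simpa [PiLp.norm_single] using ht)
  have h₁ := (hmem η (by rwa [abs_of_nonneg hη]) i).2
  have h₂ := (hmem (-η) (by rwa [abs_neg, abs_of_nonneg hη]) i).1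
  simp only [PiLp.add_apply, PiLp.single_apply, if_true] at h₁ h₂
  linarith

theorem side_mul_sqrt_le_diam (Q : Cube n) : Q.s * √n ≤ diam Q.set := by
  refine le_of_forall_lt_imp_le_of_dense fun a ha ↦ ?_
  rcases le_or_gt a 0 with ha₀ | ha₀
  · exact ha₀.trans diam_nonneg
  have hsqrt : 0 < √n := by
    rcases (Real.sqrt_nonneg (n : ℝ)).lt_or_eq with h | h
    · exact h
    · rw [← h, mul_zero] at ha
      linarith
  have hs : 0 < Q.s := by
    by_contra h
    nlinarith
  set t := a / √n
  have ht : t < Q.s := (div_lt_iff₀ hsqrt).2 ha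
  have hmem : Q.c + WithLp.toLp 2 (fun _ ↦ t) ∈ Q.set := fun i ↦ by
    simp only [PiLp.add_apply]
    constructor <;> linarith [div_pos ha₀ hsqrt]
  have hc : Q.c ∈ Q.set := fun i ↦ ⟨le_rfl, by linarith⟩
  calc a = dist (Q.c + WithLp.toLp 2 (fun _ ↦ t)) Q.c := by
        rw [dist_self_add_left, EuclideanSpace.norm_eq]
        simp only [Real.norm_eq_abs, sq_abs, Finset.sum_const, Finset.card_univ,
          Fintype.card_fin, nsmul_eq_mul]
        rw [Real.sqrt_mul (Nat.cast_nonneg n), Real.sqrt_sq (div_pos ha₀ hsqrt).le,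
          mul_div_cancel₀ _ hsqrt.ne']
    _ ≤ diam Q.set :=
        dist_le_diam_of_mem (isBounded_closedBall.subset (set_subset_closedBall_center hs.le))
          hmem hc

theorem measure_set_le_of_growth (hn : 0 < n) {μ : Measure (EuclideanSpace ℝ (Fin n))}
    {k cμ : ℝ} (hk : 0 ≤ k) (hcμ : 0 ≤ cμ)
    (hgrowth : ∀ (x : EuclideanSpace ℝ (Fin n)) (r : ℝ), 0 < r →
      μ (ball x r) ≤ ENNReal.ofReal (cμ * r ^ k))
    {Q : Cube n} {x : EuclideanSpace ℝ (Fin n)} (hx : x ∈ Q.set) {L : ℝ} (hL : Q.s ≤ L) :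
    μ Q.set ≤ ENNReal.ofReal (cμ * (2 * √n * L) ^ k) := by
  have hs := side_pos_of_mem hn hx
  have hsqrt : 0 < √n := Real.sqrt_pos.2 (by exact_mod_cast hn)
  have hsub : Q.set ⊆ ball x (2 * √n * Q.s) :=
    (set_subset_closedBall_of_mem hx hs.le).trans (closedBall_subset_ball (by nlinarith))
  calc μ Q.set ≤ μ (ball x (2 * √n * Q.s)) := measure_mono hsub
    _ ≤ ENNReal.ofReal (cμ * (2 * √n * Q.s) ^ k) := hgrowth x _ (by positivity)
    _ ≤ ENNReal.ofReal (cμ * (2 * √n * L) ^ k) := by gcongr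

/-- `αQ` lies in the closed ball of radius `α l(Q) √n / 2` about the centre of `Q`; enlarging the
radius by the factor `γ / (c α) > 1` gives an open ball to which the covering property applies. -/
theorem exists_mem_dilate_subset (hn : 0 < n) {𝒬 : Set (Cube n)} {c : ℝ} (hc : 0 < c)
    (hcov : CoversBalls c 𝒬) {α γ : ℝ} (hα : 1 ≤ α) (hγ : c * α < γ) {Q : Cube n}
    (hs : 0 < Q.s) :
    ∃ Q' ∈ 𝒬, (Q.dilate α).set ⊆ Q'.set ∧ Q.s ≤ Q'.s ∧ Q'.s ≤ γ * Q.s := by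
  have hsqrt : 1 ≤ √n := Real.one_le_sqrt.2 (by exact_mod_cast hn)
  have hαγ : α < γ / c := (lt_div_iff₀' hc).2 hγ
  have hρ : 0 < γ / c * Q.s / 2 * √n := by
    have := hs.trans_le (le_mul_of_one_le_left hs.le (hα.trans hαγ.le))
    positivity
  obtain ⟨Q', hQ', hball, hdiam⟩ := hcov Q.center _ hρ
  have hside := two_mul_le_side_of_ball_subset hn hρ hball
  refine ⟨Q', hQ', ?_, ?_, ?_⟩
  · refine (dilate_set_subset_closedBall (by positivity)).trans
      ((closedBall_subset_ball ?_).trans hball)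
    gcongr
  · have h₁ : 1 ≤ γ / c * √n := one_le_mul_of_one_le_of_one_le (by linarith) hsqrt
    calc Q.s ≤ Q.s * (γ / c * √n) := le_mul_of_one_le_right hs.le h₁
      _ = 2 * (γ / c * Q.s / 2 * √n) := by ring
      _ ≤ Q'.s := hside
  · have h : Q'.s * √n ≤ γ * Q.s * √n :=
      calc Q'.s * √n ≤ diam Q'.set := side_mul_sqrt_le_diam Q'
        _ ≤ c * (2 * (γ / c * Q.s / 2 * √n)) := hdiam
        _ = γ * Q.s * √n := by field_simp
    exact le_of_mul_le_mul_right h (by linarith)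

theorem exists_mem_isDoubling (hn : 0 < n) {𝒬 : Set (Cube n)} {c : ℝ} (hc : 0 < c)
    (hcov : CoversBalls c 𝒬) {α γ β k cμ : ℝ} (hα : 1 ≤ α) (hγ : c * α < γ) (hk : 0 ≤ k)
    (hγβ : γ ^ k < β) {μ : Measure (EuclideanSpace ℝ (Fin n))}
    (hgrowth : ∀ (x : EuclideanSpace ℝ (Fin n)) (r : ℝ), 0 < r →
      μ (ball x r) ≤ ENNReal.ofReal (cμ * r ^ k))
    {x : EuclideanSpace ℝ (Fin n)} {r : ℝ} (hr : 0 < r) (hx : 0 < μ (ball x r)) :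
    ∃ Q ∈ 𝒬, x ∈ Q.set ∧ r < Q.s ∧ Q.IsDoubling μ α β := by
  by_contra! hnd
  simp only [IsDoubling, not_le] at hnd
  have hγ₀ : 0 < γ := (mul_pos hc (by linarith)).trans hγ
  have hsqrt : 0 < √n := Real.sqrt_pos.2 (by exact_mod_cast hn)
  have hcμ : 0 ≤ cμ := by
    have := ENNReal.ofReal_pos.1 (hx.trans_le (hgrowth x r hr))
    exact (pos_of_mul_pos_left this (Real.rpow_nonneg hr.le k)).le
  obtain ⟨Q₀, hQ₀, hball, -⟩ := hcov x r hr
  have hr₀ : r < Q₀.s := by linarith [two_mul_le_side_of_ball_subset hn hr hball]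
  have step : ∀ Q : Cube n, Q ∈ 𝒬 ∧ x ∈ Q.set ∧ r < Q.s → ∃ Q' : Cube n,
      (Q' ∈ 𝒬 ∧ x ∈ Q'.set ∧ r < Q'.s) ∧ Q'.s ≤ γ * Q.s ∧
        ENNReal.ofReal β * μ Q.set ≤ μ Q'.set := by
    rintro Q ⟨hQ, hxQ, hrQ⟩
    have hs := hr.trans hrQ
    obtain ⟨Q', hQ', hsub, hle, hge⟩ := exists_mem_dilate_subset hn hc hcov hα hγ hs
    exact ⟨Q', ⟨hQ', hsub (set_subset_dilate hα hs.le hxQ), hrQ.trans_le hle⟩, hge,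
      (hnd Q hQ hxQ hrQ).le.trans (measure_mono hsub)⟩
  refine not_forall_ofReal_pow_mul_le hx.ne' (Real.rpow_pos_of_pos hγ₀ k) hγβ
    (C := cμ * (2 * √n * Q₀.s) ^ k) fun N ↦ ?_
  obtain ⟨Q, ⟨-, hxQ, -⟩, hsize, hmass⟩ := exists_chain_of_forall_exists_step
    (mass := fun Q : Cube n ↦ μ Q.set) hγ₀.le step ⟨hQ₀, hball (mem_ball_self hr), hr₀⟩ N
  calc ENNReal.ofReal β ^ N * μ (ball x r) ≤ ENNReal.ofReal β ^ N * μ Q₀.set := by gcongr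
    _ ≤ μ Q.set := hmass
    _ ≤ ENNReal.ofReal (cμ * (2 * √n * (γ ^ N * Q₀.s)) ^ k) :=
        measure_set_le_of_growth hn hk hcμ hgrowth hxQ hsize
    _ = ENNReal.ofReal (cμ * (2 * √n * Q₀.s) ^ k * (γ ^ k) ^ N) := by
        rw [show 2 * √n * (γ ^ N * Q₀.s) = γ ^ N * (2 * √n * Q₀.s) by ring,
          Real.mul_rpow (by positivity) (by nlinarith), ← Real.rpow_pow_comm hγ₀.le]
        congr 1
        ring

end Cube

theorem stmt_9_general (n : ℕ) (k cμ α β : ℝ) (hk : 0 < k) (hkn : k ≤ n)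
    (hα : 1 < α) (hβ : (cN n * α) ^ k < β)
    (μ : Measure (EuclideanSpace ℝ (Fin n)))
    (hgrowth : ∀ (x : EuclideanSpace ℝ (Fin n)) (r : ℝ), 0 < r →
      μ (Metric.ball x r) ≤ ENNReal.ofReal (cμ * r ^ k))
    (𝒜 : Fin (n + 1) → Set (Cube n))
    (hcov : ∀ (x : EuclideanSpace ℝ (Fin n)) (r : ℝ), 0 < r →
      ∃ m, ∃ Q ∈ 𝒜 m, Metric.ball x r ⊆ Q.set ∧
        Metric.diam Q.set ≤ cN n * (2 * r))
    (x : EuclideanSpace ℝ (Fin n))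
    (hx : ∀ r : ℝ, 0 < r → 0 < μ (Metric.ball x r)) (r : ℝ) (hr : 0 < r) :
    ∃ m, ∃ Q ∈ 𝒜 m, x ∈ Q.set ∧ r < Q.s ∧
      μ (Q.dilate α).set ≤ ENNReal.ofReal β * μ Q.set := by
  have hn : 0 < n := by exact_mod_cast hk.trans_le hkn
  obtain ⟨γ, hγ, hγβ⟩ :=
    Real.exists_lt_rpow_lt_of_rpow_lt (mul_pos (cN_pos hn) (by linarith)).le hk hβ
  have hcov' : Cube.CoversBalls (cN n) (⋃ m, 𝒜 m) := fun z ρ hρ ↦ by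
    obtain ⟨m, Q, hQ, hQρ⟩ := hcov z ρ hρ
    exact ⟨Q, Set.mem_iUnion.2 ⟨m, hQ⟩, hQρ⟩
  obtain ⟨Q, hQ, hQx⟩ := Cube.exists_mem_isDoubling hn (cN_pos hn) hcov' hα.le hγ hk.le hγβ
    hgrowth hr (hx r hr)
  obtain ⟨m, hm⟩ := Set.mem_iUnion.1 hQ
  exact ⟨m, Q, hm, hQx⟩

/-- Lemma 1(ii): for a measure `μ` of `k`-dimensional polynomial growth on
`ℝⁿ`, `α > 1` and `β > (c_n α)^k`, every point of `supp μ` lies, for every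
`r > 0`, in an `(α,β)`-doubling cube of the family `𝒜` of Theorem A with side
length `> r`. -/
theorem stmt_9 (n : ℕ) (k cμ α β : ℝ) (hk : 0 < k) (hkn : k ≤ n)
    (hα : 1 < α) (hβ : (cN n * α) ^ k < β)
    (μ : Measure (EuclideanSpace ℝ (Fin n)))
    (hgrowth : ∀ (x : EuclideanSpace ℝ (Fin n)) (r : ℝ), 0 < r →
      μ (Metric.ball x r) ≤ ENNReal.ofReal (cμ * r ^ k))
    (𝒜 : Fin (n + 1) → Set (Cube n))
    (hfil : ∀ m, IsDyadicFiltration (𝒜 m))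
    (hcov : ∀ (x : EuclideanSpace ℝ (Fin n)) (r : ℝ), 0 < r →
      ∃ m, ∃ Q ∈ 𝒜 m, Metric.ball x r ⊆ Q.set ∧
        Metric.diam Q.set ≤ cN n * (2 * r))
    (x : EuclideanSpace ℝ (Fin n))
    (hx : ∀ r : ℝ, 0 < r → 0 < μ (Metric.ball x r)) (r : ℝ) (hr : 0 < r) :
    ∃ m, ∃ Q ∈ 𝒜 m, x ∈ Q.set ∧ r < Q.s ∧
      μ (Q.dilate α).set ≤ ENNReal.ofReal β * μ Q.set :=
  stmt_9_general n k cμ α β hk hkn hα hβ μ hgrowth 𝒜 hcov x hx r hr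
end
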